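/- arXiv:1207.3096 — 3 statements merged into one kernel-verified Lean document; each statement's English description precedes it below -/
import Mathlib

section
/- For every real c > 0, the sequence (a_n)_{n≥1} defined by a_n = Σ_{i=0}^∞ c^i / (∏_{k=0}^i (n+k)) · (1 + c/(n+i)) satisfies the recursion a_{n+1} = (n/c)·a_n − 1/c − 1/n for all n ≥ 1. -/
/-!
Writing `n(n+1)⋯(n+i) = n · (n+1)(n+2)⋯(n+i)`, the `(i+1)`-st summand of `a_n`, multiplied by
`n`, is `c` times the `i`-th summand of `a_{n+1}`. Hence `n · a_n` is its `0`-th summand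
`n · (1/n)(1 + c/n) = 1 + c/n` plus `c · a_{n+1}`, which is the recursion.
-/

open Finset
open scoped Nat

namespace Nat

theorem ascFactorial_succ_eq_mul (n k : ℕ) : n.ascFactorial (k + 1) = n * (n + 1).ascFactorial k :=
  (succ_ascFactorial n k).symm

theorem factorial_le_ascFactorial {n : ℕ} (hn : 1 ≤ n) (k : ℕ) : k ! ≤ n.ascFactorial k := by
  simpa using ascFactorial_le k hn

end Nat

/-- The `i`-th summand of `a_n`, with `n(n+1)⋯(n+i)` written as `n.ascFactorial (i + 1)`. -/
noncomputable def seriesTerm (c : ℝ) (n i : ℕ) : ℝ :=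
  c ^ i / n.ascFactorial (i + 1) * (1 + c / (n + i : ℕ))

theorem seriesTerm_eq (c : ℝ) (n i : ℕ) :
    seriesTerm c n i = c ^ i / (∏ k ∈ range (i + 1), ((n + k : ℕ) : ℝ)) *
      (1 + c / ((n + i : ℕ) : ℝ)) := by
  rw [seriesTerm, Nat.ascFactorial_eq_prod_range, Nat.cast_prod]

theorem norm_seriesTerm_le (c : ℝ) {n : ℕ} (hn : 1 ≤ n) (i : ℕ) :
    ‖seriesTerm c n i‖ ≤ (1 + |c|) * (|c| ^ i / i !) := by
  have hfact : (i ! : ℝ) ≤ n.ascFactorial (i + 1) := by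
    exact_mod_cast (Nat.factorial_le i.le_succ).trans (Nat.factorial_le_ascFactorial hn _)
  have hni : (1 : ℝ) ≤ (n + i : ℕ) := by exact_mod_cast (by omega : 1 ≤ n + i)
  have hcorr : |1 + c / (n + i : ℕ)| ≤ 1 + |c| :=
    calc |1 + c / (n + i : ℕ)| ≤ 1 + |c| / (n + i : ℕ) :=
          (abs_add_le _ _).trans_eq (by rw [abs_one, abs_div, Nat.abs_cast])
      _ ≤ 1 + |c| := by gcongr; exact div_le_self (abs_nonneg c) hni
  rw [seriesTerm, Real.norm_eq_abs, abs_mul, abs_div, abs_pow, Nat.abs_cast, mul_comm]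
  gcongr

theorem summable_seriesTerm (c : ℝ) {n : ℕ} (hn : 1 ≤ n) : Summable (seriesTerm c n) :=
  .of_norm_bounded ((Real.summable_pow_div_factorial |c|).mul_left (1 + |c|))
    (norm_seriesTerm_le c hn)

theorem natCast_mul_seriesTerm_zero (c : ℝ) {n : ℕ} (hn : n ≠ 0) :
    n * seriesTerm c n 0 = 1 + c / n := by
  have hn' : (n : ℝ) ≠ 0 := by exact_mod_cast hn
  simp [seriesTerm, Nat.ascFactorial_succ, hn']

theorem natCast_mul_seriesTerm_succ (c : ℝ) {n : ℕ} (hn : n ≠ 0) (i : ℕ) :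
    n * seriesTerm c n (i + 1) = c * seriesTerm c (n + 1) i := by
  have hn' : (n : ℝ) ≠ 0 := by exact_mod_cast hn
  have hA : ((n + 1).ascFactorial (i + 1) : ℝ) ≠ 0 := by
    exact_mod_cast (Nat.ascFactorial_pos n _).ne'
  rw [seriesTerm, seriesTerm, Nat.ascFactorial_succ_eq_mul, Nat.cast_mul, add_assoc,
    add_comm 1 i]
  field_simp
  ring

theorem natCast_mul_tsum_seriesTerm (c : ℝ) {n : ℕ} (hn : 1 ≤ n) :
    n * ∑' i, seriesTerm c n i = 1 + c / n + c * ∑' i, seriesTerm c (n + 1) i := by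
  have hn0 : n ≠ 0 := by omega
  rw [← tsum_mul_left, ← tsum_mul_left, ((summable_seriesTerm c hn).mul_left _).tsum_eq_zero_add,
    natCast_mul_seriesTerm_zero c hn0]
  simp only [natCast_mul_seriesTerm_succ c hn0]

/-- For `c > 0`, the sequence `a_n = Σ_{i=0}^∞ c^i/(n(n+1)⋯(n+i)) · (1 + c/(n+i))`
satisfies `a_{n+1} = (n/c)·a_n − 1/c − 1/n` for all `n ≥ 1`. -/
theorem stmt2 (c : ℝ) (hc : 0 < c) (a : ℕ → ℝ)
    (ha : ∀ n : ℕ, a n =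
      ∑' i : ℕ, c ^ i / (∏ k ∈ Finset.range (i + 1), ((n + k : ℕ) : ℝ)) *
        (1 + c / ((n + i : ℕ) : ℝ))) :
    ∀ n : ℕ, 1 ≤ n → a (n + 1) = ((n : ℝ) / c) * a n - 1 / c - 1 / (n : ℝ) := by
  intro n hn
  have ha' : ∀ m, a m = ∑' i, seriesTerm c m i := fun m => by simp only [ha, seriesTerm_eq]
  have hrec := natCast_mul_tsum_seriesTerm c hn
  rw [← ha', ← ha'] at hrec
  have hn0 : (n : ℝ) ≠ 0 := by positivity
  field_simp at hrec ⊢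
  linear_combination -hrec
end

section
/- Let D ≥ 1 be an integer, R > 0, γ ∈ (0,1), and α_D the volume of the D-dimensional unit ball. Then α_D·D·∫_0^R γ^{α_D (R−r)^D / 2^D} r^{D−1} dr ≤ 2·α_D·D·R^{D−1}·(log(γ^{−α_D}))^{−1/D}. -/
/-- Let `D ≥ 1`, `R > 0`, `γ ∈ (0,1)` and `α_D = π^{D/2}/Γ(D/2+1)` the volume of
the `D`-dimensional unit ball. Then
`α_D·D·∫_0^R γ^{α_D (R−r)^D/2^D} r^{D−1} dr ≤ 2·α_D·D·R^{D−1}·(log(γ^{−α_D}))^{−1/D}`. -/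
theorem stmt7 (D : ℕ) (hD : 1 ≤ D) (R γ : ℝ) (hR : 0 < R)
    (hγ : γ ∈ Set.Ioo (0 : ℝ) 1)
    (αD : ℝ) (hαD : αD = Real.pi ^ ((D : ℝ) / 2) / Real.Gamma ((D : ℝ) / 2 + 1)) :
    αD * D * ∫ r in (0:ℝ)..R, γ ^ (αD * (R - r) ^ D / 2 ^ D) * r ^ (D - 1)
      ≤ 2 * αD * D * R ^ (D - 1) * (Real.log (γ ^ (-αD))) ^ (-(1 : ℝ) / (D : ℝ)) := by
  obtain ⟨hγ0, hγ1⟩ := hγ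
  have hD0 : (0:ℝ) < D := by exact_mod_cast hD
  have hαpos : 0 < αD := by
    have h1 : 0 < Real.Gamma ((D:ℝ)/2 + 1) := Real.Gamma_pos_of_pos (by positivity)
    rw [hαD]; positivity
  set L : ℝ := Real.log (γ ^ (-αD)) with hLdef
  have hlogγ : Real.log γ < 0 := Real.log_neg hγ0 hγ1
  have hLval : L = -αD * Real.log γ := by rw [hLdef, Real.log_rpow hγ0]
  have hLpos : 0 < L := by rw [hLval]; nlinarith
  have hb : (0:ℝ) < L / 2 ^ D := by positivity
  have key : ∀ r : ℝ, γ ^ (αD * (R - r) ^ D / 2 ^ D)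
      = Real.exp (-(L / 2 ^ D) * (R - r) ^ (D:ℝ)) := by
    intro r
    rw [Real.rpow_def_of_pos hγ0, Real.rpow_natCast]
    congr 1
    rw [hLval]; ring
  have hI0 : (∫ r in (0:ℝ)..R, γ ^ (αD * (R - r) ^ D / 2 ^ D) * r ^ (D - 1))
      = ∫ r in (0:ℝ)..R, Real.exp (-(L / 2 ^ D) * (R - r) ^ (D:ℝ)) * r ^ (D - 1) := by
    apply intervalIntegral.integral_congr
    intro x _
    simp only [key]
  have hcont : Continuous fun r : ℝ => Real.exp (-(L / 2 ^ D) * (R - r) ^ (D:ℝ)) := by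
    simp_rw [Real.rpow_natCast]
    fun_prop
  have hI1 : (∫ r in (0:ℝ)..R, Real.exp (-(L / 2 ^ D) * (R - r) ^ (D:ℝ)) * r ^ (D - 1))
      ≤ ∫ r in (0:ℝ)..R, Real.exp (-(L / 2 ^ D) * (R - r) ^ (D:ℝ)) * R ^ (D - 1) := by
    apply intervalIntegral.integral_mono_on hR.le
    · exact (hcont.mul (by fun_prop)).intervalIntegrable _ _
    · exact (hcont.mul continuous_const).intervalIntegrable _ _
    · intro x hx
      exact mul_le_mul_of_nonneg_left (pow_le_pow_left₀ hx.1 hx.2 _) (Real.exp_pos _).le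
  have hI2 : (∫ r in (0:ℝ)..R, Real.exp (-(L / 2 ^ D) * (R - r) ^ (D:ℝ)) * R ^ (D - 1))
      = R ^ (D - 1) * ∫ t in (0:ℝ)..R, Real.exp (-(L / 2 ^ D) * t ^ (D:ℝ)) := by
    rw [intervalIntegral.integral_mul_const, mul_comm]
    congr 1
    have := intervalIntegral.integral_comp_sub_left (a := (0:ℝ)) (b := R)
      (fun t => Real.exp (-(L / 2 ^ D) * t ^ (D:ℝ))) R
    simpa using this
  have hint : MeasureTheory.IntegrableOn
      (fun t : ℝ => Real.exp (-(L / 2 ^ D) * t ^ (D:ℝ))) (Set.Ioi 0) := by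
    have := integrableOn_rpow_mul_exp_neg_mul_rpow (p := (D:ℝ)) (s := 0) (b := L / 2 ^ D)
      (by norm_num) (by exact_mod_cast hD) hb
    simpa using this
  have hC : (∫ t in (0:ℝ)..R, Real.exp (-(L / 2 ^ D) * t ^ (D:ℝ)))
      ≤ ∫ t in Set.Ioi (0:ℝ), Real.exp (-(L / 2 ^ D) * t ^ (D:ℝ)) := by
    rw [intervalIntegral.integral_of_le hR.le]
    apply MeasureTheory.setIntegral_mono_set hint
    · filter_upwards with x using (Real.exp_pos _).le
    · filter_upwards with x hx using Set.Ioc_subset_Ioi_self hx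
  have hDint : (∫ t in Set.Ioi (0:ℝ), Real.exp (-(L / 2 ^ D) * t ^ (D:ℝ)))
      = (L / 2 ^ D) ^ (-1 / (D:ℝ)) * Real.Gamma (1 / (D:ℝ) + 1) :=
    integral_exp_neg_mul_rpow hD0 hb
  have hGam : Real.Gamma (1 / (D:ℝ) + 1) ≤ 1 := by
    have hinv : 0 < 1 / (D:ℝ) := by positivity
    have hinv1 : 1 / (D:ℝ) ≤ 1 := by
      rw [div_le_one hD0]; exact_mod_cast hD
    have h := Real.convexOn_Gamma.2 (show (1:ℝ) ∈ Set.Ioi 0 by norm_num)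
      (show (2:ℝ) ∈ Set.Ioi 0 by norm_num)
      (show (0:ℝ) ≤ 1 - 1 / (D:ℝ) by linarith) (show (0:ℝ) ≤ 1 / (D:ℝ) from hinv.le)
      (by ring)
    have hx : (1 - 1 / (D:ℝ)) • (1:ℝ) + (1 / (D:ℝ)) • (2:ℝ) = 1 / (D:ℝ) + 1 := by
      simp [smul_eq_mul]; ring
    rw [hx, Real.Gamma_one, Real.Gamma_two] at h
    calc Real.Gamma (1 / (D:ℝ) + 1) ≤ (1 - 1/(D:ℝ)) * 1 + (1/(D:ℝ)) * 1 := by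
          simpa [smul_eq_mul] using h
      _ = 1 := by ring
  have hcoef : (L / 2 ^ D : ℝ) ^ (-1 / (D:ℝ)) = 2 * L ^ (-1 / (D:ℝ)) := by
    rw [Real.div_rpow hLpos.le (by positivity)]
    rw [← Real.rpow_natCast 2 D, ← Real.rpow_mul (by norm_num : (0:ℝ) ≤ 2)]
    have : (D:ℝ) * (-1 / (D:ℝ)) = -1 := by field_simp
    rw [this, Real.rpow_neg_one]
    have hLr : 0 ≤ L ^ (-1 / (D:ℝ)) := Real.rpow_nonneg hLpos.le _
    field_simp
  have hGpos : 0 < Real.Gamma (1 / (D:ℝ) + 1) := Real.Gamma_pos_of_pos (by positivity)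
  have hLr : 0 ≤ L ^ (-1 / (D:ℝ)) := Real.rpow_nonneg hLpos.le _
  have hRp : (0:ℝ) ≤ R ^ (D - 1) := by positivity
  have hfinal : (∫ r in (0:ℝ)..R, γ ^ (αD * (R - r) ^ D / 2 ^ D) * r ^ (D - 1))
      ≤ 2 * R ^ (D - 1) * L ^ (-1 / (D:ℝ)) := by
    rw [hI0]
    calc _ ≤ R ^ (D - 1) * ∫ t in (0:ℝ)..R, Real.exp (-(L / 2 ^ D) * t ^ (D:ℝ)) :=
          hI1.trans hI2.le
      _ ≤ R ^ (D - 1) * ((L / 2 ^ D) ^ (-1 / (D:ℝ)) * Real.Gamma (1 / (D:ℝ) + 1)) := by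
          rw [← hDint]; exact mul_le_mul_of_nonneg_left hC hRp
      _ = R ^ (D - 1) * (2 * L ^ (-1 / (D:ℝ)) * Real.Gamma (1 / (D:ℝ) + 1)) := by
          rw [hcoef]
      _ ≤ R ^ (D - 1) * (2 * L ^ (-1 / (D:ℝ)) * 1) := by
          apply mul_le_mul_of_nonneg_left _ hRp
          apply mul_le_mul_of_nonneg_left hGam (by positivity)
      _ = 2 * R ^ (D - 1) * L ^ (-1 / (D:ℝ)) := by ring
  have h := mul_le_mul_of_nonneg_left hfinal (by positivity : (0:ℝ) ≤ αD * D)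
  calc αD * D * ∫ r in (0:ℝ)..R, γ ^ (αD * (R - r) ^ D / 2 ^ D) * r ^ (D - 1)
      ≤ αD * D * (2 * R ^ (D - 1) * L ^ (-1 / (D:ℝ))) := h
    _ = 2 * αD * D * R ^ (D - 1) * L ^ (-(1:ℝ) / (D:ℝ)) := by ring_nf
end

section
/- Consider a discrete-time Markov chain (Y_n-chain) on the nonnegative integers that from state n ≥ 1 jumps to n−1 with probability p_n = (1 + c/n)^{−1} and to n+1 with probability 1 − p_n, where c ≥ 0, and where state n has exponential holding time with mean 1/n in continuous time. The expected hitting times e_n of state 0 starting from n satisfy e_n = p_n(e_{n−1} + 1/n) + (1−p_n)(e_{n+1} + 1/n), and the minimal nonnegative solution of this recursion satisfies e_1 = (e^c − 1)/c + ∫_0^c (e^s − 1)/s ds (interpreted as 1 when c = 0), and e_n ≤ n·e_1 for all n ≥ 1. -/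
/-!
With `a_n = e_n - e_{n-1}` the recursion reads `a_{n+1} = (n/c) a_n - 1/c - 1/n`. The series
`a_n = Σ_i c^i / (n (n+1) ⋯ (n+i)) · (1 + c/(n+i))` is a nonnegative decreasing solution, so
its partial sums solve the recursion and minimality gives `e_n ≤ a_1 + ⋯ + a_n ≤ n a_1`.
The defect `a_n - (e_n - e_{n-1})` solves the homogeneous recursion, hence equals
`(a_1 - e_1) (n-1)! / c^(n-1)`; since `0 ≤ e ≤ n a_1` bounds it by `n a_1`, this forces
`e_1 = a_1`. Expanding `a_1` termwise gives the power series of `(e^c - 1)/c` and of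
`∫_0^c (e^s - 1)/s ds`. For `c = 0`, `e_n` is the harmonic number `H_n ≤ n`.
-/

open Finset
open scoped Nat

def IsHittingTimeRec (c : ℝ) (e : ℕ → ℝ) : Prop :=
  ∀ n : ℕ, 1 ≤ n →
    e n = (1 + c / n)⁻¹ * (e (n - 1) + 1 / n) + (1 - (1 + c / n)⁻¹) * (e (n + 1) + 1 / n)

theorem hitting_step_iff {c N x y z : ℝ} (hc : 0 < c) (hN : 0 < N) :
    y = (1 + c / N)⁻¹ * (x + 1 / N) + (1 - (1 + c / N)⁻¹) * (z + 1 / N) ↔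
      z - y = N / c * (y - x) - 1 / c - 1 / N := by
  rw [show (1 + c / N)⁻¹ = N / (N + c) by field_simp]
  constructor <;> intro h <;> field_simp at h ⊢ <;> linear_combination -h

theorem isHittingTimeRec_iff {c : ℝ} (hc : 0 < c) {e : ℕ → ℝ} :
    IsHittingTimeRec c e ↔ ∀ m : ℕ,
      e (m + 2) - e (m + 1) = (m + 1) / c * (e (m + 1) - e m) - 1 / c - 1 / (m + 1) := by
  have hstep (m : ℕ) := hitting_step_iff (x := e m) (y := e (m + 1)) (z := e (m + 2)) hc
    (N := (m + 1 : ℕ)) (by positivity)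
  push_cast at hstep
  refine ⟨fun h m => (hstep m).1 (by simpa using h (m + 1) (by omega)), fun h n hn => ?_⟩
  obtain ⟨m, rfl⟩ := Nat.exists_eq_add_of_le' hn
  simpa using (hstep m).2 (h m)

theorem eq_sum_of_isHittingTimeRec_zero {e : ℕ → ℝ} (he0 : e 0 = 0)
    (hrec : IsHittingTimeRec 0 e) (n : ℕ) : e n = ∑ k ∈ range n, 1 / (k + 1 : ℝ) := by
  induction n with
  | zero => simpa using he0
  | succ n ih =>
    rw [sum_range_succ, ← ih]
    simpa using hrec (n + 1) (by omega)

theorem mul_pow_eq_mul_factorial {K : Type*} [Field K] {c : K} (hc : c ≠ 0) {u : ℕ → K}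
    (h : ∀ m : ℕ, u (m + 1) = (m + 1) / c * u m) (m : ℕ) : u m * c ^ m = u 0 * m ! := by
  induction m with
  | zero => simp
  | succ m ih =>
    rw [h, pow_succ, Nat.factorial_succ]
    push_cast
    field_simp
    linear_combination (m + 1 : K) * ih

theorem hasSum_pow_div_factorial_succ {x : ℝ} (hx : x ≠ 0) :
    HasSum (fun i : ℕ => x ^ i / (i + 1)!) ((Real.exp x - 1) / x) := by
  have h := ((hasSum_nat_add_iff' 1).2 (NormedSpace.expSeries_div_hasSum_exp x)).mul_left x⁻¹
  rw [← Real.exp_eq_exp_ℝ] at h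
  have hf : (fun i : ℕ => x ^ i / (i + 1)!) = fun i => x⁻¹ * (x ^ (i + 1) / (i + 1)!) := by
    ext i
    field_simp
    ring
  rw [hf, show (Real.exp x - 1) / x = x⁻¹ * (Real.exp x - ∑ i ∈ range 1, x ^ i / i !) by
    simp [div_eq_inv_mul]]
  exact h

theorem hasDerivAt_tsum_pow_succ_div (x : ℝ) :
    HasDerivAt (fun z : ℝ => ∑' i : ℕ, z ^ (i + 1) / ((i + 1 : ℝ) * (i + 1)!))
      (∑' i : ℕ, x ^ i / (i + 1)!) x := by
  set r := |x| + 1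
  refine hasDerivAt_tsum_of_isPreconnected (u := fun i => r ^ i / i !)
    (g := fun i (z : ℝ) => z ^ (i + 1) / ((i + 1 : ℝ) * (i + 1)!))
    (g' := fun i (z : ℝ) => z ^ i / (i + 1)!)
    (Real.summable_pow_div_factorial r) Metric.isOpen_ball (convex_ball (0 : ℝ) r).isPreconnected
    (fun i y _ => ?_) (fun i y hy => ?_) (Metric.mem_ball_self (by positivity : (0 : ℝ) < r))
    ?_ (mem_ball_zero_iff.2 (by rw [Real.norm_eq_abs]; linarith : ‖x‖ < r))
  · refine ((hasDerivAt_pow (i + 1) y).div_const _).congr_deriv ?_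
    push_cast
    field_simp
  · rw [mem_ball_zero_iff] at hy
    rw [norm_div, norm_pow, RCLike.norm_natCast]
    gcongr
    omega
  · simp

theorem integral_exp_sub_one_div {c : ℝ} (hc : 0 ≤ c) :
    ∫ s in (0 : ℝ)..c, (Real.exp s - 1) / s =
      ∑' i : ℕ, c ^ (i + 1) / ((i + 1 : ℝ) * (i + 1)!) := by
  have hderiv (x : ℝ) (hx : x ∈ Set.Ioo 0 c) :
      HasDerivAt (fun z : ℝ => ∑' i : ℕ, z ^ (i + 1) / ((i + 1 : ℝ) * (i + 1)!))
        ((Real.exp x - 1) / x) x := by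
    simpa [(hasSum_pow_div_factorial_succ hx.1.ne').tsum_eq] using hasDerivAt_tsum_pow_succ_div x
  have hcont : ContinuousOn (fun z : ℝ => ∑' i : ℕ, z ^ (i + 1) / ((i + 1 : ℝ) * (i + 1)!))
      (Set.Icc 0 c) :=
    fun x _ => (hasDerivAt_tsum_pow_succ_div x).continuousAt.continuousWithinAt
  have hint : IntervalIntegrable (fun s => (Real.exp s - 1) / s) MeasureTheory.volume 0 c := by
    refine intervalIntegral.intervalIntegrable_deriv_of_nonneg (by rwa [Set.uIcc_of_le hc])
      (by simpa [hc] using hderiv) ?_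
    simp only [hc, min_eq_left, max_eq_right]
    intro x hx
    have := Real.add_one_le_exp x
    exact div_nonneg (by linarith [hx.1]) hx.1.le
  rw [intervalIntegral.integral_eq_sub_of_hasDerivAt_of_le hc hcont hderiv hint]
  simp

/-- Summed over `i`, these give the paper's `a_{m+1}`; `(m + 1).ascFactorial (i + 1)` is the
product `(m + 1) ⋯ (m + 1 + i)`. -/
noncomputable def incrementTerm (c : ℝ) (m i : ℕ) : ℝ :=
  c ^ i / (m + 1).ascFactorial (i + 1) * (1 + c / (m + 1 + i))

noncomputable def increment (c : ℝ) (m : ℕ) : ℝ := ∑' i, incrementTerm c m i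

section Increment

variable {c : ℝ}

theorem incrementTerm_nonneg (hc : 0 ≤ c) (m i : ℕ) : 0 ≤ incrementTerm c m i := by
  unfold incrementTerm
  positivity

theorem incrementTerm_le (hc : 0 ≤ c) (m i : ℕ) :
    incrementTerm c m i ≤ (1 + c) * (c ^ i / i !) := by
  have hfac : (i ! : ℝ) ≤ (m + 1).ascFactorial (i + 1) := by
    calc (i ! : ℝ) ≤ (i + 1)! := by exact_mod_cast Nat.factorial_le (Nat.le_succ i)
      _ = (1 : ℕ).ascFactorial (i + 1) := by rw [Nat.one_ascFactorial]
      _ ≤ (m + 1).ascFactorial (i + 1) := by gcongr; omega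
  have hdiv : c / (m + 1 + i) ≤ c :=
    div_le_self hc (by linarith [show (0 : ℝ) ≤ m + i by positivity])
  rw [incrementTerm, mul_comm]
  gcongr

theorem summable_incrementTerm (hc : 0 ≤ c) (m : ℕ) : Summable (incrementTerm c m) :=
  .of_nonneg_of_le (incrementTerm_nonneg hc m) (incrementTerm_le hc m)
    ((Real.summable_pow_div_factorial c).mul_left (1 + c))

theorem increment_nonneg (hc : 0 ≤ c) (m : ℕ) : 0 ≤ increment c m :=
  tsum_nonneg (incrementTerm_nonneg hc m)

theorem increment_antitone (hc : 0 ≤ c) : Antitone (increment c) := by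
  refine antitone_nat_of_succ_le fun m => (summable_incrementTerm hc _).tsum_le_tsum
    (fun i => ?_) (summable_incrementTerm hc m)
  unfold incrementTerm
  push_cast
  gcongr <;> simp

theorem sum_range_increment_le (hc : 0 ≤ c) (n : ℕ) :
    ∑ k ∈ range n, increment c k ≤ n * increment c 0 := by
  simpa using sum_le_card_nsmul (range n) _ _ fun k _ => increment_antitone hc (Nat.zero_le k)

theorem increment_succ (hc : 0 < c) (m : ℕ) :
    increment c (m + 1) = (m + 1) / c * increment c m - 1 / c - 1 / (m + 1) := by
  have hshift (i : ℕ) :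
      (m + 1 : ℕ).ascFactorial (i + 2) = (m + 1) * (m + 2).ascFactorial (i + 1) := by
    rw [Nat.ascFactorial_succ, ← Nat.succ_ascFactorial]
  have hsum : (m + 1) / c * increment c m = (1 / c + 1 / (m + 1)) + increment c (m + 1) := by
    rw [increment, ← tsum_mul_left,
      (summable_incrementTerm hc.le m).mul_left _ |>.tsum_eq_zero_add]
    congr 1
    · simp [incrementTerm, Nat.ascFactorial]
      field_simp
    · refine tsum_congr fun i => ?_
      simp only [incrementTerm, hshift]
      push_cast
      field_simp
      ring
  linarith

theorem increment_zero (hc : 0 < c) :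
    increment c 0 = (Real.exp c - 1) / c + ∫ s in (0 : ℝ)..c, (Real.exp s - 1) / s := by
  have hsplit (i : ℕ) :
      incrementTerm c 0 i = c ^ i / (i + 1)! + c ^ (i + 1) / ((i + 1 : ℝ) * (i + 1)!) := by
    simp only [incrementTerm, zero_add, Nat.one_ascFactorial]
    push_cast
    field_simp
    ring
  have hsum : HasSum (incrementTerm c 0) (increment c 0) :=
    (summable_incrementTerm hc.le 0).hasSum
  have h := hsum.sub (hasSum_pow_div_factorial_succ hc.ne')
  simp only [hsplit, add_sub_cancel_left] at h
  rw [integral_exp_sub_one_div hc.le, h.tsum_eq]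
  ring

theorem isHittingTimeRec_sum_increment (hc : 0 < c) :
    IsHittingTimeRec c fun n => ∑ k ∈ range n, increment c k := by
  rw [isHittingTimeRec_iff hc]
  intro m
  simp only [sum_range_succ, increment_succ hc]
  ring

theorem eq_increment_zero_of_le_sum (hc : 0 < c) {e : ℕ → ℝ} (he0 : e 0 = 0)
    (henn : ∀ n, 0 ≤ e n) (hrec : IsHittingTimeRec c e)
    (hle : ∀ n, e n ≤ ∑ k ∈ range n, increment c k) : e 1 = increment c 0 := by
  set A := increment c 0
  set defect : ℕ → ℝ := fun m => increment c m - (e (m + 1) - e m)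
  have hdefect (m : ℕ) : defect (m + 1) = (m + 1) / c * defect m := by
    simp only [defect, increment_succ hc, (isHittingTimeRec_iff hc).1 hrec m]
    ring
  have hdefect_le (m : ℕ) : defect m ≤ (m + 1) * A := by
    have := (hle m).trans (sum_range_increment_le hc.le m)
    have := increment_antitone hc.le (Nat.zero_le m)
    have := henn (m + 1)
    simp only [defect]
    linarith
  have hbound (m : ℕ) : defect 0 ≤ A * ((2 * c) ^ m / m !) := by
    have hA := increment_nonneg hc.le 0
    have h2 : (m + 1 : ℝ) ≤ 2 ^ m := by exact_mod_cast Nat.lt_two_pow_self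
    rw [← mul_div_assoc, le_div_iff₀ (by positivity),
      ← mul_pow_eq_mul_factorial hc.ne' hdefect]
    calc defect m * c ^ m ≤ (m + 1) * A * c ^ m := by gcongr; exact hdefect_le m
      _ ≤ 2 ^ m * A * c ^ m := by gcongr
      _ = A * (2 * c) ^ m := by ring
  have hlim := (FloorSemiring.tendsto_pow_div_factorial_atTop (2 * c)).const_mul A
  rw [mul_zero] at hlim
  have hdefect0 : defect 0 ≤ 0 := ge_of_tendsto' hlim hbound
  have he1 : e 1 ≤ A := by simpa using hle 1
  simp only [defect, he0] at hdefect0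
  linarith

end Increment

/-- Consider the jump chain on `ℤ_+` which from state `n ≥ 1` jumps down with probability
`p_n = (1+c/n)^{−1}` and up with probability `1 − p_n` (`c ≥ 0`), the holding time at `n`
being exponential with mean `1/n`. The expected hitting times `e_n` of state `0` satisfy
`e_n = p_n(e_{n−1} + 1/n) + (1−p_n)(e_{n+1} + 1/n)`, and the minimal nonnegative solution
of this recursion satisfies `e_1 = (e^c − 1)/c + ∫_0^c (e^s − 1)/s ds` (interpreted as `1`
when `c = 0`) and `e_n ≤ n·e_1` for all `n ≥ 1`. -/
theorem stmt15 (c : ℝ) (hc : 0 ≤ c) (e : ℕ → ℝ)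
    (he0 : e 0 = 0) (henn : ∀ n, 0 ≤ e n)
    (hrec : ∀ n : ℕ, 1 ≤ n →
      e n = (1 + c / n)⁻¹ * (e (n - 1) + 1 / n) + (1 - (1 + c / n)⁻¹) * (e (n + 1) + 1 / n))
    (hmin : ∀ e' : ℕ → ℝ, e' 0 = 0 → (∀ n, 0 ≤ e' n) →
      (∀ n : ℕ, 1 ≤ n →
        e' n = (1 + c / n)⁻¹ * (e' (n - 1) + 1 / n) +
          (1 - (1 + c / n)⁻¹) * (e' (n + 1) + 1 / n)) →
      ∀ n, e n ≤ e' n) :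
    e 1 = (if c = 0 then 1 else
        (Real.exp c - 1) / c + ∫ s in (0:ℝ)..c, (Real.exp s - 1) / s) ∧
    ∀ n : ℕ, 1 ≤ n → e n ≤ n * e 1 := by
  rcases hc.eq_or_lt with rfl | hc
  · have he := eq_sum_of_isHittingTimeRec_zero he0 hrec
    have he1 : e 1 = 1 := by simp [he]
    refine ⟨by simp [he1], fun n _ => ?_⟩
    rw [he1, mul_one, he]
    calc ∑ k ∈ range n, 1 / (k + 1 : ℝ) ≤ ∑ k ∈ range n, 1 :=
          sum_le_sum fun k _ => div_le_one_of_le₀ (by simp) (by positivity)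
      _ = n := by simp
  · have hle : ∀ n, e n ≤ ∑ k ∈ range n, increment c k :=
      hmin _ (by simp) (fun n => sum_nonneg fun k _ => increment_nonneg hc.le k)
        (isHittingTimeRec_sum_increment hc)
    have he1 := eq_increment_zero_of_le_sum hc he0 henn hrec hle
    refine ⟨by rw [if_neg hc.ne', he1, increment_zero hc], fun n _ => ?_⟩
    rw [he1]
    exact (hle n).trans (sum_range_increment_le hc.le n)
end
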